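/- arXiv:2502.16254 — 2 statements merged into one kernel-verified Lean document; each statement's English description precedes it below -/
import Mathlib

section
/- Let 0 → (V, S) →ⁱ (e, [·,·]_e, U) →ᵖ (g, [·,·]_g, N) → 0 be an abelian extension of the Nijenhuis Lie algebra (g, N) with induced Nijenhuis representation (V, ρ, S), let s be a section of p and (χ, F) the associated 2-cocycle. Then a pair (D_V, D_g) ∈ Der(V, S) × Der(g, N) is inducible if and only if both: (1) D_V(ρ_x v) = ρ_{D_g x} v + ρ_x(D_V v) for all x ∈ g, v ∈ V, and (2) the 2-cocycle (χ_{(D_V,D_g)}, F_{(D_V,D_g)}), with χ_{(D_V,D_g)}(x,y) := D_V(χ(x,y)) − χ(D_g x, y) − χ(x, D_g y) and F_{(D_V,D_g)}(x) := D_V(F x) − F(D_g x), is cohomologous to the zero 2-cocycle, i.e. there exists φ : g → V with χ_{(D_V,D_g)}(x,y) = ρ_x(φ y) − ρ_y(φ x) − φ[x,y]_g and F_{(D_V,D_g)}(x) = S(φ x) − φ(N x). -/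
/-!
The section `s` and the retraction `r` it determines identify `e` with `V × g`. In these
coordinates a linear endomorphism `D` of `e` with `D ∘ i = i ∘ D_V` and `p ∘ D ∘ s = D_g` is the
block-triangular map `(D_V φ; 0 D_g)` with `φ = r ∘ D ∘ s`, and every `φ : g → V` gives one.
Evaluating the Leibniz rule on `(s x, i v)` and `(s x, s y)`, and the commutation with `U` on
`s x`, shows that this map is a Nijenhuis derivation exactly when `(D_V, D_g)` is compatible with
`ρ` and `φ` is a cochain whose coboundary is `(χ_{(D_V,D_g)}, F_{(D_V,D_g)})`; conversely these
conditions give the Leibniz rule and the commutation on all of `e` by comparing coordinates.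
-/

open LinearMap

section Splitting

variable {R M N P : Type*} [Ring R] [AddCommGroup M] [AddCommGroup N] [AddCommGroup P]
  [Module R M] [Module R N] [Module R P]

structure IsSplitting (i : M →ₗ[R] N) (p : N →ₗ[R] P) (s : P →ₗ[R] N) (r : N →ₗ[R] M) : Prop where
  retract_inc : ∀ v, r (i v) = v
  retract_sect : ∀ x, r (s x) = 0
  proj_inc : ∀ v, p (i v) = 0
  proj_sect : ∀ x, p (s x) = x
  inc_add_sect : ∀ a, i (r a) + s (p a) = a

theorem exists_isSplitting {i : M →ₗ[R] N} {p : N →ₗ[R] P} (hi : Function.Injective i)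
    (hexact : range i = ker p) {s : P →ₗ[R] N} (hs : ∀ x, p (s x) = x) :
    ∃ r, IsSplitting i p s r := by
  have hip : Function.Exact i p := LinearMap.exact_iff.mpr hexact.symm
  let E := hip.splitSurjectiveEquiv hi ⟨s, LinearMap.ext hs⟩
  have hEs : ∀ x, E.1.symm (0, x) = s x := fun x => LinearMap.congr_fun
    (congrArg Subtype.val ((hip.splitSurjectiveEquiv hi).symm_apply_apply ⟨s, LinearMap.ext hs⟩)) x
  have hEi : ∀ v, E.1.symm (v, 0) = i v := fun v => (LinearMap.congr_fun E.2.1 v).symm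
  have hEp : ∀ a, (E.1 a).2 = p a := fun a => (LinearMap.congr_fun E.2.2 a).symm
  refine ⟨fst R M P ∘ₗ E.1, fun v => ?_, fun x => ?_, hip.apply_apply_eq_zero, hs, fun a => ?_⟩
  · simp [← hEi]
  · simp [← hEs]
  · rw [← hEi, ← hEs, ← hEp, ← map_add]
    simp

namespace IsSplitting

variable {i : M →ₗ[R] N} {p : N →ₗ[R] P} {s : P →ₗ[R] N} {r : N →ₗ[R] M}

theorem ext (h : IsSplitting i p s r) {a b : N} (hp : p a = p b) (hr : r a = r b) : a = b := by
  rw [← h.inc_add_sect a, ← h.inc_add_sect b, hp, hr]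

end IsSplitting

/-- The endomorphism with block matrix `(DM φ; 0 DP)` in the coordinates `N ≅ M × P` given by
`(r, p)`. -/
def triangularEnd (i : M →ₗ[R] N) (p : N →ₗ[R] P) (s : P →ₗ[R] N) (r : N →ₗ[R] M)
    (DM : M →ₗ[R] M) (DP : P →ₗ[R] P) (φ : P →ₗ[R] M) : N →ₗ[R] N :=
  s ∘ₗ DP ∘ₗ p + i ∘ₗ (φ ∘ₗ p + DM ∘ₗ r)

section triangularEnd

variable {i : M →ₗ[R] N} {p : N →ₗ[R] P} {s : P →ₗ[R] N} {r : N →ₗ[R] M}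
  {DM : M →ₗ[R] M} {DP : P →ₗ[R] P} {φ : P →ₗ[R] M}

theorem proj_triangularEnd (h : IsSplitting i p s r) (a : N) :
    p (triangularEnd i p s r DM DP φ a) = DP (p a) := by
  simp [triangularEnd, h.proj_sect, h.proj_inc]

theorem retract_triangularEnd (h : IsSplitting i p s r) (a : N) :
    r (triangularEnd i p s r DM DP φ a) = φ (p a) + DM (r a) := by
  simp [triangularEnd, h.retract_sect, h.retract_inc]

theorem triangularEnd_inc (h : IsSplitting i p s r) (v : M) :
    triangularEnd i p s r DM DP φ (i v) = i (DM v) := by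
  simp [triangularEnd, h.proj_inc, h.retract_inc]

theorem triangularEnd_sect (h : IsSplitting i p s r) (x : P) :
    triangularEnd i p s r DM DP φ (s x) = s (DP x) + i (φ x) := by
  simp [triangularEnd, h.proj_sect, h.retract_sect]

theorem eq_triangularEnd (h : IsSplitting i p s r) {D : N →ₗ[R] N}
    (hDi : ∀ v, D (i v) = i (DM v)) (hDs : ∀ x, p (D (s x)) = DP x) :
    D = triangularEnd i p s r DM DP (r ∘ₗ D ∘ₗ s) := by
  ext a
  refine h.ext ?_ ?_ <;> conv_lhs => rw [← h.inc_add_sect a]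
  · rw [proj_triangularEnd h, map_add, map_add, hDi, hDs, h.proj_inc, zero_add]
  · rw [retract_triangularEnd h, map_add, map_add, hDi, h.retract_inc, add_comm]
    rfl

end triangularEnd

end Splitting

section AbelianExtension

variable {k g V e : Type*} [CommRing k] [LieRing g] [LieAlgebra k g] [AddCommGroup V] [Module k V]
  [LieRing e] [LieAlgebra k e] {i : V →ₗ[k] e} {p : e →ₗ[k] g} {s : g →ₗ[k] e} {r : e →ₗ[k] V}
  {ρ : g → V → V} {χ : g → g → V}

theorem rep_add (h : IsSplitting i p s r) (hρ : ∀ x v, i (ρ x v) = ⁅s x, i v⁆) (x : g) (u v : V) :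
    ρ x (u + v) = ρ x u + ρ x v := by
  rw [← h.retract_inc (ρ x (u + v)), hρ, map_add, lie_add, ← hρ, ← hρ, ← map_add, h.retract_inc]

theorem retract_lie (h : IsSplitting i p s r) (hab : ∀ u v, ⁅i u, i v⁆ = 0)
    (hρ : ∀ x v, i (ρ x v) = ⁅s x, i v⁆) (hχ : ∀ x y, i (χ x y) = ⁅s x, s y⁆ - s ⁅x, y⁆)
    (a b : e) : r ⁅a, b⁆ = χ (p a) (p b) + ρ (p a) (r b) - ρ (p b) (r a) := by
  have hlie : ⁅i (r a) + s (p a), i (r b) + s (p b)⁆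
      = i (χ (p a) (p b) + ρ (p a) (r b) - ρ (p b) (r a)) + s ⁅p a, p b⁆ := by
    rw [add_lie, lie_add, lie_add, hab, ← lie_skew (i _), ← hρ, ← hρ,
      sub_eq_iff_eq_add.mp (hχ _ _).symm, map_sub, map_add]
    abel
  rw [h.inc_add_sect, h.inc_add_sect] at hlie
  rw [hlie, map_add, h.retract_inc, h.retract_sect, add_zero]

theorem retract_endo {S : V →ₗ[k] V} {U : e →ₗ[k] e} {N : g →ₗ[k] g} {F : g → V}
    (h : IsSplitting i p s r) (hUi : ∀ v, U (i v) = i (S v))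
    (hF : ∀ x, i (F x) = U (s x) - s (N x)) (a : e) : r (U a) = F (p a) + S (r a) := by
  conv_lhs => rw [← h.inc_add_sect a]
  rw [map_add, hUi, sub_eq_iff_eq_add.mp (hF _).symm, map_add, map_add, h.retract_inc,
    h.retract_inc, h.retract_sect, add_zero, add_comm]

theorem triangularEnd_isDerivation_iff {DV : V →ₗ[k] V} {Dg : g →ₗ[k] g} {φ : g →ₗ[k] V}
    (h : IsSplitting i p s r) (hab : ∀ u v, ⁅i u, i v⁆ = 0)
    (hρ : ∀ x v, i (ρ x v) = ⁅s x, i v⁆) (hχ : ∀ x y, i (χ x y) = ⁅s x, s y⁆ - s ⁅x, y⁆)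
    (hp : ∀ a b, p ⁅a, b⁆ = ⁅p a, p b⁆) (hDg : ∀ x y, Dg ⁅x, y⁆ = ⁅Dg x, y⁆ + ⁅x, Dg y⁆) :
    (∀ a b, triangularEnd i p s r DV Dg φ ⁅a, b⁆
        = ⁅triangularEnd i p s r DV Dg φ a, b⁆ + ⁅a, triangularEnd i p s r DV Dg φ b⁆) ↔
      (∀ x v, DV (ρ x v) = ρ (Dg x) v + ρ x (DV v)) ∧
      ∀ x y, DV (χ x y) - χ (Dg x) y - χ x (Dg y) = ρ x (φ y) - ρ y (φ x) - φ ⁅x, y⁆ := by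
  have hsi : ∀ x v, ⁅s x, i v⁆ = i (ρ x v) := fun x v => (hρ x v).symm
  have his : ∀ x v, ⁅i v, s x⁆ = -i (ρ x v) := fun x v => by rw [← lie_skew, hsi]
  have hss : ∀ x y, ⁅s x, s y⁆ = i (χ x y) + s ⁅x, y⁆ := fun x y =>
    sub_eq_iff_eq_add.mp (hχ x y).symm
  constructor
  · intro hT
    refine ⟨fun x v => ?_, fun x y => ?_⟩
    · have := congrArg r (hT (s x) (i v))
      simpa only [hsi, triangularEnd_inc h, triangularEnd_sect h, add_lie, hab, map_add,
        h.retract_inc, add_zero] using this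
    · have := congrArg r (hT (s x) (s y))
      simp only [hss, triangularEnd_inc h, triangularEnd_sect h, add_lie, lie_add, his, hsi,
        map_add, map_neg, h.retract_inc, h.retract_sect] at this
      linear_combination (norm := module) this
  · rintro ⟨hcompat, hcocycle⟩ a b
    refine h.ext ?_ ?_
    · simp only [proj_triangularEnd h, map_add, hp, hDg]
    · simp only [retract_triangularEnd h, map_add, retract_lie h hab hρ hχ, proj_triangularEnd h,
        hp, map_sub, hcompat, rep_add h hρ]
      linear_combination (norm := module) hcocycle (p a) (p b)

theorem triangularEnd_commute_iff {S : V →ₗ[k] V} {U : e →ₗ[k] e} {N : g →ₗ[k] g} {F : g → V}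
    {DV : V →ₗ[k] V} {Dg : g →ₗ[k] g} {φ : g →ₗ[k] V}
    (h : IsSplitting i p s r) (hUi : ∀ v, U (i v) = i (S v)) (hpU : ∀ a, p (U a) = N (p a))
    (hF : ∀ x, i (F x) = U (s x) - s (N x))
    (hDVS : ∀ v, DV (S v) = S (DV v)) (hDgN : ∀ x, Dg (N x) = N (Dg x)) :
    (∀ a, triangularEnd i p s r DV Dg φ (U a) = U (triangularEnd i p s r DV Dg φ a)) ↔
      ∀ x, DV (F x) - F (Dg x) = S (φ x) - φ (N x) := by
  constructor
  · intro hT x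
    have := congrArg r (hT (s x))
    simp only [retract_triangularEnd h, retract_endo h hUi hF, proj_triangularEnd h, hpU,
      h.proj_sect, h.retract_sect, map_zero, add_zero] at this
    linear_combination (norm := module) this
  · intro hFφ a
    refine h.ext ?_ ?_
    · simp only [proj_triangularEnd h, hpU, hDgN]
    · simp only [retract_triangularEnd h, retract_endo h hUi hF, proj_triangularEnd h, hpU,
        map_add, hDVS]
      linear_combination (norm := module) hFφ (p a)

end AbelianExtension

theorem stmt_18_general {k g V e : Type*} [Field k]
    [LieRing g] [LieAlgebra k g] [AddCommGroup V] [Module k V]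
    [LieRing e] [LieAlgebra k e]
    (N : g →ₗ[k] g) (S : V →ₗ[k] V) (U : e →ₗ[k] e)
    (i : V →ₗ[k] e) (p : e →ₗ[k] g)
    (hab : ∀ u v : V, ⁅i u, i v⁆ = 0)
    (hp : ∀ a b : e, p ⁅a, b⁆ = ⁅p a, p b⁆)
    (hiInj : Function.Injective i)
    (hexact : LinearMap.range i = LinearMap.ker p)
    (hUi : ∀ v : V, U (i v) = i (S v))
    (hpU : ∀ a : e, p (U a) = N (p a))
    -- a section of p, the induced Nijenhuis representation, the associated 2-cocycle
    (s : g →ₗ[k] e) (hs : ∀ x : g, p (s x) = x)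
    (ρ : g → V → V) (hρ : ∀ (x : g) (v : V), i (ρ x v) = ⁅s x, i v⁆)
    (χ : g → g → V) (F : g → V)
    (hχ : ∀ x y : g, i (χ x y) = ⁅s x, s y⁆ - s ⁅x, y⁆)
    (hF : ∀ x : g, i (F x) = U (s x) - s (N x))
    -- a pair (D_V, D_g) ∈ Der(V, S) × Der(g, N)
    (DV : V →ₗ[k] V) (Dg : g →ₗ[k] g)
    (hDVS : ∀ v : V, DV (S v) = S (DV v))
    (hDgLie : ∀ x y : g, Dg ⁅x, y⁆ = ⁅Dg x, y⁆ + ⁅x, Dg y⁆)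
    (hDgN : ∀ x : g, Dg (N x) = N (Dg x)) :
    -- (D_V, D_g) is inducible
    (∃ D : e →ₗ[k] e,
        (∀ a b : e, D ⁅a, b⁆ = ⁅D a, b⁆ + ⁅a, D b⁆) ∧
        (∀ a : e, D (U a) = U (D a)) ∧
        (∀ v : V, D (i v) = i (DV v)) ∧
        (∀ x : g, p (D (s x)) = Dg x))
    ↔
    -- iff the pair is compatible and the Wells class vanishes
    ((∀ (x : g) (v : V), DV (ρ x v) = ρ (Dg x) v + ρ x (DV v)) ∧
     (∃ φ : g →ₗ[k] V,
        (∀ x y : g, DV (χ x y) - χ (Dg x) y - χ x (Dg y)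
            = ρ x (φ y) - ρ y (φ x) - φ ⁅x, y⁆) ∧
        (∀ x : g, DV (F x) - F (Dg x) = S (φ x) - φ (N x)))) := by
  obtain ⟨r, hr⟩ := exists_isSplitting hiInj hexact hs
  constructor
  · rintro ⟨D, hDlie, hDU, hDi, hDs⟩
    rw [eq_triangularEnd hr hDi hDs] at hDlie hDU
    obtain ⟨hcompat, hcocycle⟩ :=
      (triangularEnd_isDerivation_iff hr hab hρ hχ hp hDgLie).mp hDlie
    exact ⟨hcompat, _, hcocycle, (triangularEnd_commute_iff hr hUi hpU hF hDVS hDgN).mp hDU⟩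
  · rintro ⟨hcompat, φ, hcocycle, hFφ⟩
    refine ⟨triangularEnd i p s r DV Dg φ,
      (triangularEnd_isDerivation_iff hr hab hρ hχ hp hDgLie).mpr ⟨hcompat, hcocycle⟩,
      (triangularEnd_commute_iff hr hUi hpU hF hDVS hDgN).mpr hFφ,
      triangularEnd_inc hr, fun x => ?_⟩
    rw [proj_triangularEnd hr, hr.proj_sect]

/-- Given an abelian extension of the Nijenhuis Lie algebra `(g, N)`
with induced Nijenhuis representation `(V, ρ, S)`, a section `s` and the associated
2-cocycle `(χ, F)`, a pair `(D_V, D_g) ∈ Der(V,S) × Der(g,N)` is inducible if and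
only if (1) it is compatible with `ρ` and (2) the transformed 2-cocycle
`(χ_{(D_V,D_g)}, F_{(D_V,D_g)})` is cohomologous to zero. -/
theorem stmt_18 {k g V e : Type*} [Field k]
    [LieRing g] [LieAlgebra k g] [AddCommGroup V] [Module k V]
    [LieRing e] [LieAlgebra k e]
    (N : g →ₗ[k] g) (S : V →ₗ[k] V) (U : e →ₗ[k] e)
    (hN : ∀ x y : g, ⁅N x, N y⁆ = N (⁅N x, y⁆ + ⁅x, N y⁆ - N ⁅x, y⁆))
    (hU : ∀ a b : e, ⁅U a, U b⁆ = U (⁅U a, b⁆ + ⁅a, U b⁆ - U ⁅a, b⁆))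
    (i : V →ₗ[k] e) (p : e →ₗ[k] g)
    (hab : ∀ u v : V, ⁅i u, i v⁆ = 0)
    (hp : ∀ a b : e, p ⁅a, b⁆ = ⁅p a, p b⁆)
    (hiInj : Function.Injective i) (hpSurj : Function.Surjective p)
    (hexact : LinearMap.range i = LinearMap.ker p)
    (hUi : ∀ v : V, U (i v) = i (S v))
    (hpU : ∀ a : e, p (U a) = N (p a))
    -- a section of p, the induced Nijenhuis representation, the associated 2-cocycle
    (s : g →ₗ[k] e) (hs : ∀ x : g, p (s x) = x)
    (ρ : g → V → V) (hρ : ∀ (x : g) (v : V), i (ρ x v) = ⁅s x, i v⁆)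
    (χ : g → g → V) (F : g → V)
    (hχ : ∀ x y : g, i (χ x y) = ⁅s x, s y⁆ - s ⁅x, y⁆)
    (hF : ∀ x : g, i (F x) = U (s x) - s (N x))
    -- a pair (D_V, D_g) ∈ Der(V, S) × Der(g, N)
    (DV : V →ₗ[k] V) (Dg : g →ₗ[k] g)
    (hDVS : ∀ v : V, DV (S v) = S (DV v))
    (hDgLie : ∀ x y : g, Dg ⁅x, y⁆ = ⁅Dg x, y⁆ + ⁅x, Dg y⁆)
    (hDgN : ∀ x : g, Dg (N x) = N (Dg x)) :
    -- (D_V, D_g) is inducible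
    (∃ D : e →ₗ[k] e,
        (∀ a b : e, D ⁅a, b⁆ = ⁅D a, b⁆ + ⁅a, D b⁆) ∧
        (∀ a : e, D (U a) = U (D a)) ∧
        (∀ v : V, D (i v) = i (DV v)) ∧
        (∀ x : g, p (D (s x)) = Dg x))
    ↔
    -- iff the pair is compatible and the Wells class vanishes
    ((∀ (x : g) (v : V), DV (ρ x v) = ρ (Dg x) v + ρ x (DV v)) ∧
     (∃ φ : g →ₗ[k] V,
        (∀ x y : g, DV (χ x y) - χ (Dg x) y - χ x (Dg y)
            = ρ x (φ y) - ρ y (φ x) - φ ⁅x, y⁆) ∧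
        (∀ x : g, DV (F x) - F (Dg x) = S (φ x) - φ (N x)))) :=
  stmt_18_general N S U i p hab hp hiInj hexact hUi hpU s hs ρ hρ χ F hχ hF DV Dg hDVS hDgLie hDgN
end

section
/- Let 0 → (V, S) →ⁱ (e, [·,·]_e, U) →ᵖ (g, [·,·]_g, N) → 0 be an abelian extension of the Nijenhuis Lie algebra (g, N) with induced Nijenhuis representation (V, ρ, S), and let s be a section of p. Define ι : Der((g, N); (V, S)) → Der_V(e, U) by ι(d) := i ∘ d ∘ p. Then ι is well defined (i ∘ d ∘ p is indeed a derivation of e commuting with U and preserving V) and injective, and for D ∈ Der_V(e, U) one has D|_V = 0 and p ∘ D ∘ s = 0 if and only if D = ι(d) for some d ∈ Der((g, N); (V, S)); i.e. the sequence 0 → Der((g, N); (V, S)) →^ι Der_V(e, U) →^η Der(V, S) × Der(g, N) with η(D) = (D|_V, p D s) is exact at the first two places. -/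
/-!
A derivation of `e` that kills `V` and has `p ∘ D ∘ s = 0` vanishes on `ker p = V` and takes
values in `V`, so it factors as `i ∘ d ∘ p` with `d := D ∘ s` read in `V`. Since `V` is abelian,
`⁅a, i v⁆` only depends on `p a`, which turns the derivation rule for `i ∘ d ∘ p` into the
cocycle rule for `d` with respect to `ρ`, and compatibility with `U` into `S ∘ d = d ∘ N`.
Evaluating at `s x` (with `p (s x) = x`) and cancelling the injective `i` gives the converses.
-/

theorem LinearMap.exists_comp_eq_of_forall_mem_range {R M N P : Type*} [Semiring R]
    [AddCommMonoid M] [AddCommMonoid N] [AddCommMonoid P] [Module R M] [Module R N] [Module R P]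
    {i : M →ₗ[R] N} (hi : Function.Injective i) {f : P →ₗ[R] N}
    (hf : ∀ x, f x ∈ LinearMap.range i) : ∃ d : P →ₗ[R] M, i ∘ₗ d = f :=
  ⟨(LinearEquiv.ofInjective i hi).symm.toLinearMap ∘ₗ f.codRestrict _ hf, by ext; simp⟩

section AbelianExtension

variable {k g V e : Type*} [CommRing k] [AddCommGroup V] [Module k V]

section Linear

variable [AddCommGroup g] [Module k g] [AddCommGroup e] [Module k e]
  {i : V →ₗ[k] e} {p : e →ₗ[k] g} {s : g →ₗ[k] e}

theorem Function.Exact.exists_eq_sub_section (hex : Function.Exact i p)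
    (hs : ∀ x, p (s x) = x) (a : e) : ∃ w, i w = a - s (p a) :=
  (hex _).mp (by simp [hs])

theorem Function.Exact.eq_comp_section_comp {M : Type*} [AddCommGroup M] [Module k M]
    (hex : Function.Exact i p) (hs : ∀ x, p (s x) = x) {D : e →ₗ[k] M}
    (hD : ∀ v, D (i v) = 0) : D = D ∘ₗ s ∘ₗ p := by
  ext a
  obtain ⟨w, hw⟩ := hex.exists_eq_sub_section hs a
  have : D (a - s (p a)) = 0 := hw ▸ hD w
  simpa [sub_eq_zero] using this

theorem comp_comp_injective_of_section (hi : Function.Injective i) (hs : ∀ x, p (s x) = x)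
    {d d' : g →ₗ[k] V} (h : i ∘ₗ d ∘ₗ p = i ∘ₗ d' ∘ₗ p) : d = d' := by
  ext x
  simpa [hs] using hi (LinearMap.congr_fun h (s x))

theorem comp_comp_comm_iff_of_section (hi : Function.Injective i) (hs : ∀ x, p (s x) = x)
    {N : g →ₗ[k] g} {S : V →ₗ[k] V} {U : e →ₗ[k] e}
    (hUi : ∀ v, U (i v) = i (S v)) (hpU : ∀ a, p (U a) = N (p a)) (d : g →ₗ[k] V) :
    (∀ a, (i ∘ₗ d ∘ₗ p) (U a) = U ((i ∘ₗ d ∘ₗ p) a)) ↔ ∀ x, S (d x) = d (N x) := by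
  simp only [LinearMap.comp_apply, hpU, hUi]
  refine ⟨fun h x => hi ?_, fun h a => by rw [h]⟩
  simpa [hs] using (h (s x)).symm

theorem Function.Exact.exists_eq_comp_comp (hi : Function.Injective i)
    (hex : Function.Exact i p) (hs : ∀ x, p (s x) = x) {D : e →ₗ[k] e}
    (hDV : ∀ v, D (i v) = 0) (hDs : ∀ x, p (D (s x)) = 0) : ∃ d : g →ₗ[k] V, D = i ∘ₗ d ∘ₗ p := by
  obtain ⟨d, hd⟩ := LinearMap.exists_comp_eq_of_forall_mem_range hi (f := D ∘ₗ s)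
    fun x => (hex _).mp (hDs x)
  exact ⟨d, by rw [← LinearMap.comp_assoc, hd]; exact hex.eq_comp_section_comp hs hDV⟩

end Linear

variable [LieRing g] [LieAlgebra k g] [LieRing e] [LieAlgebra k e]
  {i : V →ₗ[k] e} {p : e →ₗ[k] g} {s : g →ₗ[k] e}

theorem Function.Exact.lie_eq_lie_section (hex : Function.Exact i p) (hs : ∀ x, p (s x) = x)
    (hab : ∀ u v, ⁅i u, i v⁆ = 0) (a : e) (v : V) : ⁅a, i v⁆ = ⁅s (p a), i v⁆ := by
  obtain ⟨w, hw⟩ := hex.exists_eq_sub_section hs a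
  rw [← sub_eq_zero, ← sub_lie, ← hw, hab]

theorem Function.Exact.lie_add_lie_eq (hex : Function.Exact i p) (hs : ∀ x, p (s x) = x)
    (hab : ∀ u v, ⁅i u, i v⁆ = 0) {ρ : g → V → V} (hρ : ∀ x v, i (ρ x v) = ⁅s x, i v⁆)
    (d : g →ₗ[k] V) (a b : e) :
    ⁅i (d (p a)), b⁆ + ⁅a, i (d (p b))⁆ = i (ρ (p a) (d (p b)) - ρ (p b) (d (p a))) := by
  rw [map_sub, hρ, hρ, ← lie_skew, hex.lie_eq_lie_section hs hab a,
    hex.lie_eq_lie_section hs hab b]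
  abel

theorem Function.Exact.comp_comp_isDerivation_iff (hi : Function.Injective i)
    (hex : Function.Exact i p) (hs : ∀ x, p (s x) = x) (hab : ∀ u v, ⁅i u, i v⁆ = 0)
    (hp : ∀ a b, p ⁅a, b⁆ = ⁅p a, p b⁆) {ρ : g → V → V} (hρ : ∀ x v, i (ρ x v) = ⁅s x, i v⁆)
    (d : g →ₗ[k] V) :
    (∀ a b, (i ∘ₗ d ∘ₗ p) ⁅a, b⁆ = ⁅(i ∘ₗ d ∘ₗ p) a, b⁆ + ⁅a, (i ∘ₗ d ∘ₗ p) b⁆) ↔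
      ∀ x y, d ⁅x, y⁆ = ρ x (d y) - ρ y (d x) := by
  simp only [LinearMap.comp_apply, hp, hex.lie_add_lie_eq hs hab hρ]
  refine ⟨fun h x y => hi ?_, fun h a b => by rw [h]⟩
  simpa [hs] using h (s x) (s y)

end AbelianExtension

theorem stmt_19_general {k g V e : Type*} [Field k]
    [LieRing g] [LieAlgebra k g] [AddCommGroup V] [Module k V]
    [LieRing e] [LieAlgebra k e]
    (N : g →ₗ[k] g) (S : V →ₗ[k] V) (U : e →ₗ[k] e)
    (i : V →ₗ[k] e) (p : e →ₗ[k] g)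
    (hab : ∀ u v : V, ⁅i u, i v⁆ = 0)
    (hp : ∀ a b : e, p ⁅a, b⁆ = ⁅p a, p b⁆)
    (hiInj : Function.Injective i)
    (hexact : LinearMap.range i = LinearMap.ker p)
    (hUi : ∀ v : V, U (i v) = i (S v))
    (hpU : ∀ a : e, p (U a) = N (p a))
    -- a section of p and the induced Nijenhuis representation
    (s : g →ₗ[k] e) (hs : ∀ x : g, p (s x) = x)
    (ρ : g → V → V) (hρ : ∀ (x : g) (v : V), i (ρ x v) = ⁅s x, i v⁆) :
    -- ι is well defined: for d ∈ Der((g,N);(V,S)), i∘d∘p lies in Der_V(e,U)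
    (∀ d : g →ₗ[k] V,
        (∀ x : g, S (d x) = d (N x)) →
        (∀ x y : g, d ⁅x, y⁆ = ρ x (d y) - ρ y (d x)) →
        (∀ a b : e, (i ∘ₗ d ∘ₗ p) ⁅a, b⁆
            = ⁅(i ∘ₗ d ∘ₗ p) a, b⁆ + ⁅a, (i ∘ₗ d ∘ₗ p) b⁆) ∧
        (∀ a : e, (i ∘ₗ d ∘ₗ p) (U a) = U ((i ∘ₗ d ∘ₗ p) a)) ∧
        (∀ v : V, ∃ w : V, (i ∘ₗ d ∘ₗ p) (i v) = i w)) ∧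
    -- ι is injective
    (∀ d d' : g →ₗ[k] V, i ∘ₗ d ∘ₗ p = i ∘ₗ d' ∘ₗ p → d = d') ∧
    -- exactness at Der_V(e,U): ker η = im ι
    (∀ D : e →ₗ[k] e,
        (∀ a b : e, D ⁅a, b⁆ = ⁅D a, b⁆ + ⁅a, D b⁆) →
        (∀ a : e, D (U a) = U (D a)) →
        (∀ v : V, ∃ w : V, D (i v) = i w) →
        (((∀ v : V, D (i v) = 0) ∧ (∀ x : g, p (D (s x)) = 0)) ↔
          (∃ d : g →ₗ[k] V,
            (∀ x : g, S (d x) = d (N x)) ∧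
            (∀ x y : g, d ⁅x, y⁆ = ρ x (d y) - ρ y (d x)) ∧
            D = i ∘ₗ d ∘ₗ p))) := by
  have hex : Function.Exact i p := LinearMap.exact_iff.mpr hexact.symm
  have isDerivation_iff := hex.comp_comp_isDerivation_iff hiInj hs hab hp hρ
  have map_comm_iff := comp_comp_comm_iff_of_section hiInj hs hUi hpU
  refine ⟨fun d hdN hdρ => ⟨(isDerivation_iff d).mpr hdρ, (map_comm_iff d).mpr hdN,
    fun v => ⟨_, rfl⟩⟩, fun _ _ => comp_comp_injective_of_section hiInj hs,
    fun D hDder hDU _ => ⟨?_, ?_⟩⟩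
  · rintro ⟨hDV, hDs⟩
    obtain ⟨d, rfl⟩ := hex.exists_eq_comp_comp hiInj hs hDV hDs
    exact ⟨d, (map_comm_iff d).mp hDU, (isDerivation_iff d).mp hDder, rfl⟩
  · rintro ⟨d, -, -, rfl⟩
    simp [hex.apply_apply_eq_zero]

/-- For an abelian extension of a Nijenhuis Lie algebra with induced
Nijenhuis representation `(V, ρ, S)` and a section `s`, the map
`ι(d) := i ∘ d ∘ p` is well defined from `Der((g,N);(V,S))` to `Der_V(e,U)` and
injective, and a derivation `D ∈ Der_V(e,U)` satisfies `D|_V = 0` and `p∘D∘s = 0`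
iff `D = ι(d)` for some `d ∈ Der((g,N);(V,S))`; i.e. the sequence
`0 → Der((g,N);(V,S)) → Der_V(e,U) → Der(V,S) × Der(g,N)` is exact at the first
two places. -/
theorem stmt_19 {k g V e : Type*} [Field k]
    [LieRing g] [LieAlgebra k g] [AddCommGroup V] [Module k V]
    [LieRing e] [LieAlgebra k e]
    (N : g →ₗ[k] g) (S : V →ₗ[k] V) (U : e →ₗ[k] e)
    (hN : ∀ x y : g, ⁅N x, N y⁆ = N (⁅N x, y⁆ + ⁅x, N y⁆ - N ⁅x, y⁆))
    (hU : ∀ a b : e, ⁅U a, U b⁆ = U (⁅U a, b⁆ + ⁅a, U b⁆ - U ⁅a, b⁆))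
    (i : V →ₗ[k] e) (p : e →ₗ[k] g)
    (hab : ∀ u v : V, ⁅i u, i v⁆ = 0)
    (hp : ∀ a b : e, p ⁅a, b⁆ = ⁅p a, p b⁆)
    (hiInj : Function.Injective i) (hpSurj : Function.Surjective p)
    (hexact : LinearMap.range i = LinearMap.ker p)
    (hUi : ∀ v : V, U (i v) = i (S v))
    (hpU : ∀ a : e, p (U a) = N (p a))
    -- a section of p and the induced Nijenhuis representation
    (s : g →ₗ[k] e) (hs : ∀ x : g, p (s x) = x)
    (ρ : g → V → V) (hρ : ∀ (x : g) (v : V), i (ρ x v) = ⁅s x, i v⁆) :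
    -- ι is well defined: for d ∈ Der((g,N);(V,S)), i∘d∘p lies in Der_V(e,U)
    (∀ d : g →ₗ[k] V,
        (∀ x : g, S (d x) = d (N x)) →
        (∀ x y : g, d ⁅x, y⁆ = ρ x (d y) - ρ y (d x)) →
        (∀ a b : e, (i ∘ₗ d ∘ₗ p) ⁅a, b⁆
            = ⁅(i ∘ₗ d ∘ₗ p) a, b⁆ + ⁅a, (i ∘ₗ d ∘ₗ p) b⁆) ∧
        (∀ a : e, (i ∘ₗ d ∘ₗ p) (U a) = U ((i ∘ₗ d ∘ₗ p) a)) ∧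
        (∀ v : V, ∃ w : V, (i ∘ₗ d ∘ₗ p) (i v) = i w)) ∧
    -- ι is injective
    (∀ d d' : g →ₗ[k] V, i ∘ₗ d ∘ₗ p = i ∘ₗ d' ∘ₗ p → d = d') ∧
    -- exactness at Der_V(e,U): ker η = im ι
    (∀ D : e →ₗ[k] e,
        (∀ a b : e, D ⁅a, b⁆ = ⁅D a, b⁆ + ⁅a, D b⁆) →
        (∀ a : e, D (U a) = U (D a)) →
        (∀ v : V, ∃ w : V, D (i v) = i w) →
        (((∀ v : V, D (i v) = 0) ∧ (∀ x : g, p (D (s x)) = 0)) ↔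
          (∃ d : g →ₗ[k] V,
            (∀ x : g, S (d x) = d (N x)) ∧
            (∀ x y : g, d ⁅x, y⁆ = ρ x (d y) - ρ y (d x)) ∧
            D = i ∘ₗ d ∘ₗ p))) :=
  stmt_19_general N S U i p hab hp hiInj hexact hUi hpU s hs ρ hρ
end
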